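/- arXiv:2505.22666 — 4 statements merged into one kernel-verified Lean document; each statement's English description precedes it below -/
import Mathlib

section
/- The integral ∫₀¹ log Γ(t)/(1−t) dt converges and satisfies ∫₀¹ log Γ(t)/(1−t) dt ≤ 2. -/
open MeasureTheory Set

/-- On `(0,1)`, `Γ(t) ≥ 1`. -/
lemma aux_one_le_Gamma {t : ℝ} (ht : t ∈ Set.Ioo (0:ℝ) 1) : 1 ≤ Real.Gamma t := by
  obtain ⟨ht0, ht1⟩ := ht
  have hΓpos : 0 < Real.Gamma t := Real.Gamma_pos_of_pos ht0
  have hconv := Real.convexOn_Gamma.2 (Set.mem_Ioi.mpr ht0 : t ∈ Set.Ioi 0)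
    (Set.mem_Ioi.mpr (by linarith) : t + 1 ∈ Set.Ioi (0:ℝ))
    (ht0.le : (0:ℝ) ≤ t) (by linarith : (0:ℝ) ≤ 1 - t) (show t + (1 - t) = 1 by ring)
  have hadd : Real.Gamma (t + 1) = t * Real.Gamma t := Real.Gamma_add_one ht0.ne'
  have h1 : t • t + (1 - t) • (t + 1) = 1 := by simp [smul_eq_mul]; ring
  rw [h1] at hconv
  rw [Real.Gamma_one] at hconv
  simp only [smul_eq_mul, hadd] at hconv
  nlinarith [hΓpos, sq_nonneg (1 - t)]

/-- On `(0,1)`, `Γ(t) ≤ 1/t`. -/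
lemma aux_Gamma_le {t : ℝ} (ht : t ∈ Set.Ioo (0:ℝ) 1) : Real.Gamma t ≤ 1 / t := by
  obtain ⟨ht0, ht1⟩ := ht
  have hconv := Real.convexOn_Gamma.2 (Set.mem_Ioi.mpr one_pos : (1:ℝ) ∈ Set.Ioi 0)
    (Set.mem_Ioi.mpr two_pos : (2:ℝ) ∈ Set.Ioi 0)
    (by linarith : (0:ℝ) ≤ 1 - t) (ht0.le : (0:ℝ) ≤ t) (show (1 - t) + t = 1 by ring)
  have h2 : Real.Gamma 2 = 1 := by
    rw [show (2:ℝ) = 1 + 1 by norm_num, Real.Gamma_add_one one_ne_zero, Real.Gamma_one, mul_one]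
  have h1 : (1 - t) • (1:ℝ) + t • (2:ℝ) = t + 1 := by simp [smul_eq_mul]; ring
  rw [h1, Real.Gamma_one, h2] at hconv
  have hadd : Real.Gamma (t + 1) = t * Real.Gamma t := Real.Gamma_add_one ht0.ne'
  simp only [smul_eq_mul, hadd, mul_one] at hconv
  rw [le_div_iff₀ ht0, mul_comm]
  linarith

/-- Key pointwise bound: on `(0,1)`, `-log t ≤ (1-t) * (1 - log t)`. -/
lemma aux_neg_log_le {t : ℝ} (ht0 : 0 < t) (ht1 : t < 1) :
    -Real.log t ≤ (1 - t) * (1 - Real.log t) := by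
  have h := Real.log_le_sub_one_of_pos (show 0 < t⁻¹ by positivity)
  rw [Real.log_inv] at h
  -- -log t ≤ 1/t - 1, so t - t * log t ≤ 1
  have h2 : t * (-Real.log t) ≤ t * (t⁻¹ - 1) := by
    apply mul_le_mul_of_nonneg_left h ht0.le
  rw [mul_sub, mul_inv_cancel₀ ht0.ne'] at h2
  nlinarith [h2]

lemma aux_f_bounds {t : ℝ} (ht : t ∈ Set.Ioo (0:ℝ) 1) :
    0 ≤ Real.log (Real.Gamma t) / (1 - t) ∧
      Real.log (Real.Gamma t) / (1 - t) ≤ 1 - Real.log t := by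
  obtain ⟨ht0, ht1⟩ := ht
  have h1t : (0:ℝ) < 1 - t := by linarith
  have hlogΓ0 : 0 ≤ Real.log (Real.Gamma t) :=
    Real.log_nonneg (aux_one_le_Gamma ⟨ht0, ht1⟩)
  constructor
  · positivity
  · have hΓle : Real.Gamma t ≤ 1 / t := aux_Gamma_le ⟨ht0, ht1⟩
    have hlog_le : Real.log (Real.Gamma t) ≤ -Real.log t := by
      have := Real.log_le_log (Real.Gamma_pos_of_pos ht0) hΓle
      rwa [one_div, Real.log_inv] at this
    have := aux_neg_log_le ht0 ht1
    rw [div_le_iff₀ h1t]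
    calc Real.log (Real.Gamma t) ≤ -Real.log t := hlog_le
      _ ≤ (1 - t) * (1 - Real.log t) := this
      _ = (1 - Real.log t) * (1 - t) := by ring

lemma aux_neg_log_le_rpow {t : ℝ} (ht0 : 0 < t) :
    -Real.log t ≤ 2 * t ^ (-(1/2) : ℝ) := by
  have hs : (0:ℝ) < t ^ ((1/2) : ℝ) := Real.rpow_pos_of_pos ht0 _
  have h := Real.log_le_sub_one_of_pos (show 0 < (t ^ ((1/2):ℝ))⁻¹ by positivity)
  rw [Real.log_inv, Real.log_rpow ht0] at h
  have hinv : (t ^ ((1/2):ℝ))⁻¹ = t ^ (-(1/2) : ℝ) := by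
    rw [← Real.rpow_neg ht0.le]
  rw [hinv] at h
  have : (0:ℝ) < t ^ (-(1/2) : ℝ) := Real.rpow_pos_of_pos ht0 _
  linarith

/-- The dominating function is integrable on `(0,1)`. -/
lemma aux_dom_integrable :
    IntegrableOn (fun t : ℝ => 1 + 2 * t ^ (-(1/2) : ℝ)) (Set.Ioo 0 1) := by
  have h1 : IntervalIntegrable (fun t : ℝ => t ^ (-(1/2) : ℝ)) volume 0 1 :=
    intervalIntegral.intervalIntegrable_rpow' (by norm_num)
  rw [intervalIntegrable_iff_integrableOn_Ioc_of_le zero_le_one] at h1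
  have h2 : IntegrableOn (fun t : ℝ => t ^ (-(1/2) : ℝ)) (Set.Ioo 0 1) :=
    h1.mono_set Set.Ioo_subset_Ioc_self
  have h3 : IntegrableOn (fun _ : ℝ => (1:ℝ)) (Set.Ioo 0 1) :=
    (integrableOn_const_iff (C := (1:ℝ))).mpr (Or.inr (by rw [Real.volume_Ioo]; exact ENNReal.ofReal_lt_top))
  exact h3.add (h2.const_mul 2)

lemma aux_f_contOn :
    ContinuousOn (fun t : ℝ => Real.log (Real.Gamma t) / (1 - t)) (Set.Ioo 0 1) := by
  intro t ht
  obtain ⟨ht0, ht1⟩ := ht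
  apply ContinuousAt.continuousWithinAt
  apply ContinuousAt.div
  · refine ContinuousAt.log ?_ (Real.Gamma_pos_of_pos ht0).ne'
    refine (Real.differentiableAt_Gamma fun m => ?_).continuousAt
    have : (0:ℝ) ≤ m := Nat.cast_nonneg m
    intro h; rw [h] at ht0; linarith
  · fun_prop
  · intro h; linarith [h]

lemma aux_integrable :
    IntegrableOn (fun t : ℝ => Real.log (Real.Gamma t) / (1 - t)) (Set.Ioo 0 1) := by
  apply Integrable.mono aux_dom_integrable
    (aux_f_contOn.aestronglyMeasurable measurableSet_Ioo)
  rw [ae_restrict_iff' measurableSet_Ioo]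
  filter_upwards with t ht
  obtain ⟨h0, h1⟩ := aux_f_bounds ht
  have h2 : -Real.log t ≤ 2 * t ^ (-(1/2) : ℝ) := aux_neg_log_le_rpow ht.1
  have h3 : (0:ℝ) < t ^ (-(1/2) : ℝ) := Real.rpow_pos_of_pos ht.1 _
  rw [Real.norm_eq_abs, Real.norm_eq_abs, abs_of_nonneg h0, abs_of_nonneg (by linarith)]
  linarith

theorem integral_logGamma_div_one_sub :
    IntegrableOn (fun t : ℝ => Real.log (Real.Gamma t) / (1 - t)) (Set.Ioo 0 1) ∧
    ∫ t in Set.Ioo (0:ℝ) 1, Real.log (Real.Gamma t) / (1 - t) ≤ 2 := by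
  refine ⟨aux_integrable, ?_⟩
  set f : ℝ → ℝ := fun t => Real.log (Real.Gamma t) / (1 - t) with hf
  -- monotone family of sets exhausting Ioo 0 1
  set s : ℕ → Set ℝ := fun n => Set.Ioc ((1:ℝ)/(n+2)) 1 ∩ Set.Ioo 0 1 with hs
  have hsm : ∀ n, MeasurableSet (s n) := fun n =>
    measurableSet_Ioc.inter measurableSet_Ioo
  have hmono : Monotone s := by
    intro m n hmn
    apply Set.inter_subset_inter_left
    apply Set.Ioc_subset_Ioc_left
    apply div_le_div_of_nonneg_left zero_le_one (by positivity)
    exact_mod_cast by omega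
  have hunion : (⋃ n, s n) = Set.Ioo 0 1 := by
    apply Set.Subset.antisymm
    · exact Set.iUnion_subset fun n => Set.inter_subset_right
    · intro x hx
      obtain ⟨hx0, hx1⟩ := hx
      obtain ⟨n, hn⟩ := exists_nat_one_div_lt hx0
      refine Set.mem_iUnion.mpr ⟨n, ⟨?_, hx1.le⟩, hx0, hx1⟩
      calc (1:ℝ)/(n+2) ≤ 1/(n+1) := by
            apply div_le_div_of_nonneg_left zero_le_one (by positivity) (by push_cast; linarith)
        _ < x := hn
  have hInt : IntegrableOn f (⋃ n, s n) := by rw [hunion]; exact aux_integrable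
  have htendsto := MeasureTheory.tendsto_setIntegral_of_monotone hsm hmono hInt
  rw [hunion] at htendsto
  refine le_of_tendsto htendsto (Filter.Eventually.of_forall fun n => ?_)
  -- bound each ∫_{s n} f by ∫ over s n of (1 - log t), then ≤ 2
  set a : ℝ := (1:ℝ)/(n+2) with ha
  have ha0 : 0 < a := by positivity
  have ha1 : a < 1 := by
    rw [ha, div_lt_one (by positivity)]
    have : (0:ℝ) ≤ n := Nat.cast_nonneg n
    linarith
  have hsub : s n ⊆ Set.Ioo 0 1 := Set.inter_subset_right
  have hg_int : IntegrableOn (fun t : ℝ => 1 - Real.log t) (s n) := by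
    have hc : ContinuousOn (fun t : ℝ => 1 - Real.log t) (Set.Icc a 1) := by
      apply continuousOn_const.sub
      apply Real.continuousOn_log.mono
      intro x hx
      simp only [Set.mem_compl_iff, Set.mem_singleton_iff]
      have := hx.1; intro h; rw [h] at this; linarith
    have := hc.integrableOn_Icc (μ := volume)
    apply this.mono_set
    intro x hx
    exact ⟨le_of_lt hx.1.1, hx.1.2⟩
  have hf_int : IntegrableOn f (s n) := aux_integrable.mono_set hsub
  have hmonoInt : ∫ t in s n, f t ≤ ∫ t in s n, (1 - Real.log t) := by
    apply setIntegral_mono_on hf_int hg_int (hsm n)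
    intro t ht
    exact (aux_f_bounds (hsub ht)).2
  have hseq : s n = Set.Ioc a 1 ∩ Set.Ioo 0 1 := rfl
  have hsn_eq : s n = Set.Ioo a 1 := by
    rw [hseq]
    ext x
    simp only [Set.mem_inter_iff, Set.mem_Ioc, Set.mem_Ioo]
    constructor
    · rintro ⟨⟨h1, h2⟩, h3, h4⟩; exact ⟨h1, h4⟩
    · rintro ⟨h1, h2⟩; exact ⟨⟨h1, h2.le⟩, lt_trans ha0 h1, h2⟩
  have hval : ∫ t in s n, (1 - Real.log t) = 2 - 2*a + a * Real.log a := by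
    rw [hsn_eq, ← MeasureTheory.integral_Ioc_eq_integral_Ioo,
      ← intervalIntegral.integral_of_le ha1.le]
    have hlog_ii : IntervalIntegrable Real.log volume a 1 := by
      refine intervalIntegral.intervalIntegrable_log ?_
      rw [Set.uIcc_of_le ha1.le]
      intro h
      exact absurd h.1 (by linarith)
    rw [intervalIntegral.integral_sub intervalIntegrable_const hlog_ii]
    rw [integral_log]
    simp [Real.log_one]
    ring
  have hloga : Real.log a ≤ 0 := Real.log_nonpos ha0.le ha1.le
  have hkey : ∫ t in s n, f t ≤ 2 - 2*a + a * Real.log a := hmonoInt.trans_eq hval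
  have h0 : a * Real.log a ≤ 0 := mul_nonpos_of_nonneg_of_nonpos ha0.le hloga
  linarith
end

section
/- For every complex number α with Re(α) > 0, the sum of the right- and left-sided Riemann–Liouville fractional integrals of log Γ of order α satisfies I₁₋^α log Γ(0) + I₀₊^α log Γ(1) = (1/Γ(α)) ∫₀¹ t^{α−1} log Γ(t) dt + (1/Γ(α)) ∫₀¹ (1−t)^{α−1} log Γ(t) dt = (1/Γ(α)) ( (log π)/α − ∫₀¹ t^{α−1} log sin(πt) dt ). -/
open MeasureTheory Finset

private lemma contAt_logGamma {x : ℝ} (hx : 0 < x) :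
    ContinuousAt (fun t : ℝ => Real.log (Real.Gamma t)) x :=
  ((Real.differentiableAt_Gamma fun m =>
    ((neg_nonpos.mpr (Nat.cast_nonneg m)).trans_lt hx).ne').continuousAt).log
    (Real.Gamma_pos_of_pos hx).ne'

theorem sum_right_left_fractional_raabe (α : ℂ) (hα : 0 < α.re) :
    (1 / Complex.Gamma α) *
        (∫ t in (0:ℝ)..1, (t : ℂ) ^ (α - 1) * (Real.log (Real.Gamma t) : ℂ)) +
      (1 / Complex.Gamma α) *
        (∫ t in (0:ℝ)..1, ((1 - t : ℝ) : ℂ) ^ (α - 1) * (Real.log (Real.Gamma t) : ℂ))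
      = (1 / Complex.Gamma α) *
          ((Real.log Real.pi : ℂ) / α -
            ∫ t in (0:ℝ)..1, (t : ℂ) ^ (α - 1) * (Real.log (Real.sin (Real.pi * t)) : ℂ)) := by
  have hα0 : α ≠ 0 := by
    intro h
    rw [h] at hα
    simp at hα
  have hre : (α - 1).re = α.re - 1 := by simp [Complex.sub_re]
  -- a uniform bound for |log Γ| on [1/2, 2]
  obtain ⟨C, hC⟩ : ∃ C : ℝ, ∀ x ∈ Set.Icc (1/2 : ℝ) 2, |Real.log (Real.Gamma x)| ≤ C := by
    obtain ⟨C, hC⟩ := (isCompact_Icc (a := (1/2:ℝ)) (b := 2)).exists_bound_of_continuousOn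
      (f := fun t : ℝ => Real.log (Real.Gamma t))
      (fun x hx => (contAt_logGamma (lt_of_lt_of_le (by norm_num) hx.1)).continuousWithinAt)
    exact ⟨C, fun x hx => hC x hx⟩
  -- bound for |log Γ| on (0,1)
  have hbound : ∀ ε : ℝ, 0 < ε → ∀ t ∈ Set.Ioo (0:ℝ) 1,
      |Real.log (Real.Gamma t)| ≤ C + (1/ε) * t ^ (-ε) := by
    intro ε hε t ht
    have h2 : Real.log (Real.Gamma t) = Real.log (Real.Gamma (t+1)) - Real.log t := by
      have h1 : Real.Gamma t = Real.Gamma (t+1) / t := by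
        rw [Real.Gamma_add_one ht.1.ne', mul_div_cancel_left₀ _ ht.1.ne']
      rw [h1, Real.log_div (Real.Gamma_pos_of_pos (by linarith [ht.1])).ne' ht.1.ne']
    have h3 : |Real.log t| ≤ (1/ε) * t ^ (-ε) := by
      rw [abs_of_nonpos (Real.log_nonpos ht.1.le ht.2.le), ← Real.log_inv]
      calc Real.log t⁻¹ ≤ (t⁻¹) ^ ε / ε := Real.log_le_rpow_div (inv_nonneg.mpr ht.1.le) hε
        _ = (1/ε) * t ^ (-ε) := by
            rw [Real.inv_rpow ht.1.le, ← Real.rpow_neg ht.1.le]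
            ring
    calc |Real.log (Real.Gamma t)|
        ≤ |Real.log (Real.Gamma (t+1))| + |Real.log t| := by
          rw [h2]; exact abs_sub _ _
      _ ≤ C + (1/ε) * t ^ (-ε) :=
          add_le_add (hC (t+1) ⟨by linarith [ht.1], by linarith [ht.2]⟩) h3
  -- integrability of t^(α-1) log Γ t
  have L1 : IntervalIntegrable
      (fun t : ℝ => (t:ℂ) ^ (α - 1) * (Real.log (Real.Gamma t) : ℂ)) volume 0 1 := by
    rw [intervalIntegrable_iff_integrableOn_Ioo_of_le zero_le_one]
    have hg : IntegrableOn
        (fun t : ℝ => C * t ^ (α.re - 1) + (1/(α.re/2)) * t ^ (α.re/2 - 1))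
        (Set.Ioo (0:ℝ) 1) volume := by
      have h1 : IntervalIntegrable
          (fun t : ℝ => C * t ^ (α.re - 1) + (1/(α.re/2)) * t ^ (α.re/2 - 1)) volume 0 1 :=
        ((intervalIntegral.intervalIntegrable_rpow' (by linarith)).const_mul C).add
          ((intervalIntegral.intervalIntegrable_rpow' (by linarith)).const_mul (1/(α.re/2)))
      rwa [intervalIntegrable_iff_integrableOn_Ioo_of_le zero_le_one] at h1
    refine hg.mono' ?_ ?_
    · apply ContinuousOn.aestronglyMeasurable ?_ measurableSet_Ioo
      apply ContinuousOn.mul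
      · exact fun x hx =>
          (Complex.continuousAt_ofReal_cpow_const x _ (Or.inr hx.1.ne')).continuousWithinAt
      · exact fun x hx =>
          (Complex.continuous_ofReal.continuousAt.comp (contAt_logGamma hx.1)).continuousWithinAt
    · filter_upwards [ae_restrict_mem measurableSet_Ioo] with t ht
      rw [norm_mul,
        Complex.norm_cpow_eq_rpow_re_of_pos ht.1, Complex.norm_real, Real.norm_eq_abs, hre]
      have key : t ^ (α.re/2 - 1) = t ^ (α.re - 1) * t ^ (-(α.re/2)) := by
        rw [← Real.rpow_add ht.1]
        congr 1
        ring
      calc t ^ (α.re - 1) * |Real.log (Real.Gamma t)|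
          ≤ t ^ (α.re - 1) * (C + (1/(α.re/2)) * t ^ (-(α.re/2))) :=
            mul_le_mul_of_nonneg_left (hbound (α.re/2) (by linarith) t ht)
              (Real.rpow_nonneg ht.1.le _)
        _ = C * t ^ (α.re - 1) + (1/(α.re/2)) * t ^ (α.re/2 - 1) := by
            rw [key]; ring
  -- integrability of t^(α-1) log Γ (1-t)
  have L2a : IntervalIntegrable
      (fun t : ℝ => (t:ℂ) ^ (α - 1) * (Real.log (Real.Gamma (1 - t)) : ℂ)) volume 0 (1/2) := by
    rw [intervalIntegrable_iff_integrableOn_Ioo_of_le (by norm_num)]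
    have hg : IntegrableOn (fun t : ℝ => C * t ^ (α.re - 1)) (Set.Ioo (0:ℝ) (1/2)) volume := by
      have h1 : IntervalIntegrable (fun t : ℝ => C * t ^ (α.re - 1)) volume 0 (1/2) :=
        (intervalIntegral.intervalIntegrable_rpow' (by linarith)).const_mul C
      rwa [intervalIntegrable_iff_integrableOn_Ioo_of_le (by norm_num)] at h1
    refine hg.mono' ?_ ?_
    · apply ContinuousOn.aestronglyMeasurable ?_ measurableSet_Ioo
      apply ContinuousOn.mul
      · exact fun x hx =>
          (Complex.continuousAt_ofReal_cpow_const x _ (Or.inr hx.1.ne')).continuousWithinAt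
      · intro x hx
        have h1 : ContinuousAt (fun t : ℝ => Real.log (Real.Gamma (1 - t))) x := by
          have := (contAt_logGamma (show (0:ℝ) < 1 - x by linarith [hx.2])).comp
            ((continuous_const.sub continuous_id).continuousAt (x := x))
          exact this
        exact (Complex.continuous_ofReal.continuousAt.comp h1).continuousWithinAt
    · filter_upwards [ae_restrict_mem measurableSet_Ioo] with t ht
      rw [norm_mul,
        Complex.norm_cpow_eq_rpow_re_of_pos ht.1, Complex.norm_real, Real.norm_eq_abs, hre]
      rw [mul_comm C]
      exact mul_le_mul_of_nonneg_left
        (hC (1 - t) ⟨by linarith [ht.2], by linarith [ht.1]⟩)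
        (Real.rpow_nonneg ht.1.le _)
  have L2b : IntervalIntegrable
      (fun t : ℝ => (t:ℂ) ^ (α - 1) * (Real.log (Real.Gamma (1 - t)) : ℂ)) volume (1/2) 1 := by
    rw [intervalIntegrable_iff_integrableOn_Ioo_of_le (by norm_num)]
    set M := max 1 ((1/2 : ℝ) ^ (α.re - 1)) with hM
    have hM0 : (0:ℝ) ≤ M := le_trans zero_le_one (le_max_left _ _)
    have hg : IntegrableOn
        (fun t : ℝ => M * (C + (1/(1/2:ℝ)) * (1 - t) ^ (-(1/2) : ℝ)))
        (Set.Ioo (1/2:ℝ) 1) volume := by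
      have h0 := (intervalIntegral.intervalIntegrable_rpow'
        (r := (-(1/2) : ℝ)) (by norm_num) (a := 0) (b := 1/2)).comp_sub_left 1
      norm_num at h0
      have h1 : IntervalIntegrable
          (fun t : ℝ => M * (C + (1/(1/2:ℝ)) * (1 - t) ^ (-(1/2) : ℝ))) volume (1/2) 1 :=
        ((intervalIntegrable_const.add (h0.symm.const_mul (1/(1/2:ℝ)))).const_mul M)
      rwa [intervalIntegrable_iff_integrableOn_Ioo_of_le (by norm_num)] at h1
    refine hg.mono' ?_ ?_
    · apply ContinuousOn.aestronglyMeasurable ?_ measurableSet_Ioo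
      apply ContinuousOn.mul
      · exact fun x hx =>
          (Complex.continuousAt_ofReal_cpow_const x _
            (Or.inr (by linarith [hx.1] : x ≠ 0))).continuousWithinAt
      · intro x hx
        have h1 : ContinuousAt (fun t : ℝ => Real.log (Real.Gamma (1 - t))) x :=
          (contAt_logGamma (show (0:ℝ) < 1 - x by linarith [hx.2])).comp
            ((continuous_const.sub continuous_id).continuousAt (x := x))
        exact (Complex.continuous_ofReal.continuousAt.comp h1).continuousWithinAt
    · filter_upwards [ae_restrict_mem measurableSet_Ioo] with t ht
      have ht0 : (0:ℝ) < t := by linarith [ht.1]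
      rw [norm_mul,
        Complex.norm_cpow_eq_rpow_re_of_pos ht0, Complex.norm_real, Real.norm_eq_abs, hre]
      have h1 : t ^ (α.re - 1) ≤ M := by
        rcases le_or_gt 0 (α.re - 1) with h | h
        · exact le_trans (Real.rpow_le_one ht0.le ht.2.le h) (le_max_left _ _)
        · exact le_trans (Real.rpow_le_rpow_of_nonpos (by norm_num) ht.1.le h.le)
            (le_max_right _ _)
      have h2 : |Real.log (Real.Gamma (1 - t))| ≤ C + (1/(1/2:ℝ)) * (1 - t) ^ (-(1/2) : ℝ) :=
        hbound (1/2) (by norm_num) (1 - t) ⟨by linarith [ht.2], by linarith [ht.1]⟩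
      exact mul_le_mul h1 h2 (abs_nonneg _) hM0
  have L2 : IntervalIntegrable
      (fun t : ℝ => (t:ℂ) ^ (α - 1) * (Real.log (Real.Gamma (1 - t)) : ℂ)) volume 0 1 :=
    L2a.trans L2b
  have hconst : IntervalIntegrable
      (fun t : ℝ => (t:ℂ) ^ (α - 1) * (Real.log Real.pi : ℂ)) volume 0 1 :=
    (intervalIntegral.intervalIntegrable_cpow' (by rw [hre]; linarith)).mul_const _
  -- substitution t ↦ 1 - t in the second integral
  have hsub : (∫ t in (0:ℝ)..1, ((1 - t : ℝ) : ℂ) ^ (α - 1) * (Real.log (Real.Gamma t) : ℂ))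
      = ∫ t in (0:ℝ)..1, (t : ℂ) ^ (α - 1) * (Real.log (Real.Gamma (1 - t)) : ℂ) := by
    have h := intervalIntegral.integral_comp_sub_left
      (fun s : ℝ => ((1 - s : ℝ) : ℂ) ^ (α - 1) * (Real.log (Real.Gamma s) : ℂ)) 1
      (a := 0) (b := 1)
    simp only [sub_sub_cancel, sub_self, sub_zero] at h
    exact h.symm
  -- value of ∫ t^(α-1)
  have hval : (∫ t in (0:ℝ)..1, ((t:ℝ):ℂ) ^ (α - 1)) = 1/α := by
    rw [integral_cpow (Or.inl (by rw [hre]; linarith))]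
    have h1 : α - 1 + 1 = α := by ring
    rw [h1]
    push_cast
    rw [Complex.one_cpow, Complex.zero_cpow hα0]
    simp
  -- rewriting the log sin integral via the reflection formula
  have hae : (∫ t in (0:ℝ)..1, (t:ℂ) ^ (α - 1) * (Real.log (Real.sin (Real.pi * t)) : ℂ))
      = ∫ t in (0:ℝ)..1, ((t:ℂ) ^ (α - 1) * (Real.log Real.pi : ℂ)
          - (t:ℂ) ^ (α - 1) * (Real.log (Real.Gamma t) : ℂ)
          - (t:ℂ) ^ (α - 1) * (Real.log (Real.Gamma (1 - t)) : ℂ)) := by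
    apply intervalIntegral.integral_congr_ae
    have h1 : ∀ᵐ x : ℝ ∂(volume : Measure ℝ), x ≠ 1 := by
      rw [MeasureTheory.ae_iff]
      simp [Real.volume_singleton]
    filter_upwards [h1] with t ht1 htI
    rw [Set.uIoc_of_le zero_le_one] at htI
    have ht : t ∈ Set.Ioo (0:ℝ) 1 := ⟨htI.1, lt_of_le_of_ne htI.2 ht1⟩
    have hsin : 0 < Real.sin (Real.pi * t) :=
      Real.sin_pos_of_pos_of_lt_pi (mul_pos Real.pi_pos ht.1)
        (mul_lt_of_lt_one_right Real.pi_pos ht.2)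
    have hΓ1 : 0 < Real.Gamma t := Real.Gamma_pos_of_pos ht.1
    have hΓ2 : 0 < Real.Gamma (1 - t) := Real.Gamma_pos_of_pos (by linarith [ht.2])
    have hrefl := Real.Gamma_mul_Gamma_one_sub t
    have hs : Real.log (Real.sin (Real.pi * t)) =
        Real.log Real.pi - Real.log (Real.Gamma t) - Real.log (Real.Gamma (1 - t)) := by
      have h2 : Real.sin (Real.pi * t) = Real.pi / (Real.Gamma t * Real.Gamma (1 - t)) := by
        rw [eq_div_iff (by positivity)]
        rw [eq_div_iff hsin.ne'] at hrefl
        nlinarith [hrefl]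
      rw [h2, Real.log_div Real.pi_pos.ne' (by positivity),
        Real.log_mul hΓ1.ne' hΓ2.ne']
      ring
    rw [hs]
    push_cast
    ring
  rw [hsub, hae,
    intervalIntegral.integral_sub (hconst.sub L1) L2,
    intervalIntegral.integral_sub hconst L1,
    intervalIntegral.integral_mul_const, hval]
  ring
end

section
/- Let α, β be complex numbers with Re(α) > 0 and Re(β) ≥ 1. Then (1/Γ(α)) ∫₀¹ (1−t)^{α−1} t^{β−1} log Γ(t) dt = (1/Γ(α)) Σ_{n=0}^{∞} (−1)^n C(α−1, n) Γ(n+β) · I₁₋^{n+β} log Γ(0), where I₁₋^{γ} log Γ(0) = (1/Γ(γ)) ∫₀¹ t^{γ−1} log Γ(t) dt and C(α−1, n) = (α−1)(α−2)⋯(α−n)/n!. In particular, the series on the right converges. -/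
open MeasureTheory Finset

/-- The generalized binomial coefficient `C(z, n) = z(z−1)⋯(z−n+1)/n!`, with `C(z,0) = 1`. -/
noncomputable def genBinom (z : ℂ) (n : ℕ) : ℂ :=
  (∏ i ∈ Finset.range n, (z - i)) / (n.factorial : ℂ)

/-- The right-sided Riemann–Liouville fractional integral of `log Γ` of order `γ`
at the point `0` over `[0,1]`: `I₁₋^γ log Γ(0) = (1/Γ(γ)) ∫₀¹ t^{γ−1} log Γ(t) dt`. -/
noncomputable def rightRL (γ : ℂ) : ℂ :=
  (1 / Complex.Gamma γ) * ∫ t in (0:ℝ)..1, (t : ℂ) ^ (γ - 1) * (Real.log (Real.Gamma t) : ℂ)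

lemma genBinom_zero (z : ℂ) : genBinom z 0 = 1 := by simp [genBinom]

lemma genBinom_succ (z : ℂ) (n : ℕ) :
    genBinom z (n+1) = genBinom z n * (z - n) / (n+1) := by
  unfold genBinom
  rw [Finset.prod_range_succ, Nat.factorial_succ]
  push_cast
  rw [div_mul_eq_mul_div, div_div, mul_comm ((n:ℂ)+1)]

lemma genBinom_succ_mul (z : ℂ) (n : ℕ) :
    genBinom z (n+1) * (n+1) = genBinom z n * (z - n) := by
  rw [genBinom_succ, div_mul_cancel₀]
  exact Nat.cast_add_one_ne_zero n

lemma norm_genBinom_succ (z : ℂ) (n : ℕ) :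
    ‖genBinom z (n+1)‖ = ‖genBinom z n‖ * ‖z - n‖ / (n+1) := by
  rw [genBinom_succ, norm_div, norm_mul]
  congr 1
  rw [show ((n:ℂ)+1) = ((n+1:ℕ):ℂ) by push_cast; ring, Complex.norm_natCast]
  push_cast; ring

-- ratio-test summability
lemma summable_genBinom_mul_pow (z : ℂ) {x : ℂ} (hx : ‖x‖ < 1) :
    Summable (fun n : ℕ => genBinom z n * x ^ n) := by
  set r : ℝ := (1 + ‖x‖) / 2 with hr
  have hxr : ‖x‖ < r := by rw [hr]; linarith
  have hr1 : r < 1 := by rw [hr]; linarith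
  apply summable_of_ratio_norm_eventually_le hr1
  rcases eq_or_lt_of_le (norm_nonneg x) with h0 | h0
  · filter_upwards [Filter.eventually_ge_atTop 1] with n hn
    have : x = 0 := by simpa using h0.symm
    simp [this, zero_pow (by omega : n + 1 ≠ 0)]
    positivity
  · have hd : 0 < r - ‖x‖ := by linarith
    obtain ⟨N, hN⟩ := Filter.eventually_atTop.mp
      (Filter.Tendsto.eventually_ge_atTop tendsto_natCast_atTop_atTop (‖z‖ * ‖x‖ / (r - ‖x‖)))
    filter_upwards [Filter.eventually_ge_atTop N] with n hn
    have h1 : ‖z‖ * ‖x‖ / (r - ‖x‖) ≤ (n:ℝ) := hN n hn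
    have h2 : ‖z‖ * ‖x‖ ≤ (r - ‖x‖) * n := by
      rw [div_le_iff₀ hd] at h1; linarith [h1]
    have hzn : ‖z - (n:ℂ)‖ ≤ ‖z‖ + n := by
      calc ‖z - (n:ℂ)‖ ≤ ‖z‖ + ‖(n:ℂ)‖ := norm_sub_le _ _
      _ = ‖z‖ + n := by norm_num
    calc ‖genBinom z (n+1) * x^(n+1)‖ = ‖genBinom z n‖ * ‖z - n‖ / (n+1) * (‖x‖ * ‖x‖^n) := by
          rw [norm_mul, norm_genBinom_succ, pow_succ, norm_mul, norm_pow, mul_comm ‖x‖]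
      _ = (‖z - n‖ * ‖x‖ / (n+1)) * (‖genBinom z n‖ * ‖x‖^n) := by ring
      _ ≤ r * (‖genBinom z n‖ * ‖x‖^n) := by
          apply mul_le_mul_of_nonneg_right _ (by positivity)
          rw [div_le_iff₀ (by positivity)]
          calc ‖z - (n:ℂ)‖ * ‖x‖ ≤ (‖z‖ + n) * ‖x‖ :=
                mul_le_mul_of_nonneg_right hzn (norm_nonneg x)
            _ = ‖z‖ * ‖x‖ + n * ‖x‖ := by ring
            _ ≤ (r - ‖x‖) * n + n * ‖x‖ := by linarith
            _ = r * n := by ring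
            _ ≤ r * (n+1) := by nlinarith [hr, norm_nonneg x]
      _ = r * ‖genBinom z n * x^n‖ := by rw [norm_mul, norm_pow]

lemma summable_deriv_genBinom (z : ℂ) {r : ℝ} (hr0 : 0 ≤ r) (hr1 : r < 1) :
    Summable (fun n : ℕ => (n : ℝ) * ‖genBinom z n‖ * r ^ (n - 1)) := by
  set r' : ℝ := (1 + r) / 2 with hr'
  have hrr' : r < r' := by rw [hr']; linarith
  have hr'1 : r' < 1 := by rw [hr']; linarith
  have hr'0 : 0 < r' := by rw [hr']; linarith
  apply summable_of_ratio_norm_eventually_le hr'1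
  obtain ⟨N, hN⟩ := Filter.eventually_atTop.mp
    (Filter.Tendsto.eventually_ge_atTop tendsto_natCast_atTop_atTop
      ((‖z‖ * r + r' + ‖z‖ + r) / (r' - r)))
  filter_upwards [Filter.eventually_ge_atTop (max N 1)] with n hn
  have hn1 : 1 ≤ n := le_of_max_le_right hn
  have h1 : (‖z‖ * r + r' + ‖z‖ + r) / (r' - r) ≤ (n:ℝ) := hN n (le_of_max_le_left hn)
  have h2 : ‖z‖ * r + r' + ‖z‖ + r ≤ (r' - r) * n := by
    rw [div_le_iff₀ (by linarith)] at h1; linarith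
  have hzn : ‖z - (n:ℂ)‖ ≤ ‖z‖ + n := by
    calc ‖z - (n:ℂ)‖ ≤ ‖z‖ + ‖(n:ℂ)‖ := norm_sub_le _ _
    _ = ‖z‖ + n := by norm_num
  have hnn : (n:ℝ) ≥ 1 := by exact_mod_cast hn1
  have hpow : r ^ n = r * r ^ (n - 1) := by
    obtain ⟨m, rfl⟩ := Nat.exists_eq_add_of_le hn1
    simp [pow_succ]
    ring
  have key : ((n:ℝ)+1) * ‖genBinom z (n+1)‖ * r ^ n
      = ‖genBinom z n‖ * ‖z - n‖ * r * r ^ (n-1) := by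
    rw [norm_genBinom_succ, hpow]
    field_simp
  rw [Real.norm_of_nonneg (by positivity), Real.norm_of_nonneg (by positivity)]
  push_cast
  rw [key]
  have hb : ‖z - (n:ℂ)‖ * r ≤ r' * n := by
    calc ‖z - (n:ℂ)‖ * r ≤ (‖z‖ + n) * r := mul_le_mul_of_nonneg_right hzn hr0
      _ = ‖z‖ * r + n * r := by ring
      _ ≤ ‖z‖ * r + n * r := le_refl _
      _ ≤ r' * n := by nlinarith
  calc ‖genBinom z n‖ * ‖z - (n:ℂ)‖ * r * r ^ (n-1)
      = (‖z - (n:ℂ)‖ * r) * (‖genBinom z n‖ * r ^ (n-1)) := by ring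
    _ ≤ (r' * n) * (‖genBinom z n‖ * r ^ (n-1)) :=
        mul_le_mul_of_nonneg_right hb (by positivity)
    _ = r' * ((n:ℝ) * ‖genBinom z n‖ * r ^ (n-1)) := by ring

lemma binomial_hasSum (z : ℂ) {x : ℝ} (hx : |x| < 1) :
    HasSum (fun n : ℕ => genBinom z n * (x:ℂ)^n)
      (Complex.exp ((Real.log (1+x) : ℂ) * z)) := by
  set f : ℝ → ℂ := fun y => ∑' n : ℕ, genBinom z n * (y:ℂ)^n with hf_def
  set D : ℝ → ℂ := fun y => ∑' n : ℕ, genBinom z n * (((n:ℝ) * y^(n-1) : ℝ) : ℂ) with hD_def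
  have sumf : ∀ y : ℝ, |y| < 1 → Summable (fun n : ℕ => genBinom z n * (y:ℂ)^n) := by
    intro y hy
    exact summable_genBinom_mul_pow z (by rwa [Complex.norm_real, Real.norm_eq_abs])
  have sumd : ∀ y : ℝ, |y| < 1 →
      Summable (fun n : ℕ => genBinom z n * (((n:ℝ) * y^(n-1) : ℝ) : ℂ)) := by
    intro y hy
    apply Summable.of_norm_bounded (summable_deriv_genBinom z (abs_nonneg y) hy)
    intro n
    rw [norm_mul, Complex.norm_real, Real.norm_eq_abs, abs_mul, abs_pow, Nat.abs_cast]
    calc ‖genBinom z n‖ * ((n:ℝ) * |y|^(n-1)) = (n:ℝ) * ‖genBinom z n‖ * |y|^(n-1) := by ring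
      _ ≤ _ := le_refl _
  -- differentiability
  have hasD : ∀ y : ℝ, |y| < 1 → HasDerivAt f (D y) y := by
    intro y hy
    set r : ℝ := (1 + |y|) / 2 with hr
    have hyr : |y| < r := by rw [hr]; linarith
    have hr0 : 0 ≤ r := by positivity
    have hr1 : r < 1 := by rw [hr]; linarith
    have hmem : y ∈ Set.Ioo (-r) r := by
      rw [Set.mem_Ioo]; constructor <;> [linarith [neg_abs_le y]; linarith [le_abs_self y]]
    have hg : ∀ (n : ℕ) (w : ℝ), w ∈ Set.Ioo (-r) r →
        HasDerivAt (fun w : ℝ => genBinom z n * (w:ℂ)^n)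
          (genBinom z n * (((n:ℝ) * w^(n-1) : ℝ) : ℂ)) w := by
      intro n w _
      have h1 := ((hasDerivAt_pow n w).ofReal_comp).const_mul (genBinom z n)
      simpa [Complex.ofReal_pow] using h1
    have hg' : ∀ (n : ℕ) (w : ℝ), w ∈ Set.Ioo (-r) r →
        ‖genBinom z n * (((n:ℝ) * w^(n-1) : ℝ) : ℂ)‖ ≤ (n:ℝ) * ‖genBinom z n‖ * r^(n-1) := by
      intro n w hw
      rw [norm_mul, Complex.norm_real, Real.norm_eq_abs, abs_mul, abs_pow, Nat.abs_cast]
      have hwr : |w| ≤ r := by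
        rw [abs_le]; exact ⟨hw.1.le, hw.2.le⟩
      calc ‖genBinom z n‖ * ((n:ℝ) * |w|^(n-1))
          ≤ ‖genBinom z n‖ * ((n:ℝ) * r^(n-1)) := by
            apply mul_le_mul_of_nonneg_left _ (norm_nonneg _)
            exact mul_le_mul_of_nonneg_left (pow_le_pow_left₀ (abs_nonneg w) hwr _)
              (Nat.cast_nonneg n)
        _ = (n:ℝ) * ‖genBinom z n‖ * r^(n-1) := by ring
    exact hasDerivAt_tsum_of_isPreconnected (summable_deriv_genBinom z hr0 hr1)
      isOpen_Ioo (convex_Ioo _ _).isPreconnected hg hg' hmem (sumf y hy) hmem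
  -- the ODE identity
  have key : ∀ y : ℝ, |y| < 1 → (1 + (y:ℂ)) * D y = z * f y := by
    intro y hy
    have Sd := sumd y hy
    have S1 : Summable (fun n : ℕ => genBinom z n * (z - n) * (y:ℂ)^n) := by
      apply ((summable_nat_add_iff 1).mpr Sd).congr
      intro n
      rw [← genBinom_succ_mul]
      push_cast
      ring
    have S2 : Summable (fun n : ℕ => genBinom z n * (n:ℂ) * (y:ℂ)^n) := by
      apply (Sd.mul_left (y:ℂ)).congr
      intro n
      cases n with
      | zero => simp
      | succ m => push_cast; ring
    have hD1 : D y = ∑' n : ℕ, genBinom z n * (z - n) * (y:ℂ)^n := by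
      simp only [hD_def]
      rw [Sd.tsum_eq_zero_add]
      simp only [Nat.cast_zero, zero_mul, Complex.ofReal_zero, mul_zero, zero_add]
      apply tsum_congr
      intro n
      rw [← genBinom_succ_mul]
      push_cast
      ring
    have hD2 : (y:ℂ) * D y = ∑' n : ℕ, genBinom z n * (n:ℂ) * (y:ℂ)^n := by
      simp only [hD_def]
      rw [← tsum_mul_left]
      apply tsum_congr
      intro n
      cases n with
      | zero => simp
      | succ m => push_cast; ring
    calc (1 + (y:ℂ)) * D y = D y + (y:ℂ) * D y := by ring
      _ = ∑' n : ℕ, (genBinom z n * (z - n) * (y:ℂ)^n + genBinom z n * (n:ℂ) * (y:ℂ)^n) := by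
          rw [hD2, hD1, ← S1.tsum_add S2]
      _ = ∑' n : ℕ, z * (genBinom z n * (y:ℂ)^n) := by
          apply tsum_congr; intro n; ring
      _ = z * f y := by simp only [hf_def]; exact tsum_mul_left
  -- the auxiliary function g is constant
  set g : ℝ → ℂ := fun y => f y * Complex.exp (-((Real.log (1+y) : ℂ) * z)) with hg_def
  have hgderiv : ∀ y ∈ Set.Ioo (-1:ℝ) 1, HasDerivAt g 0 y := by
    intro y hy
    have hy' : |y| < 1 := abs_lt.mpr ⟨hy.1, hy.2⟩
    have h1y : (0:ℝ) < 1 + y := by linarith [hy.1]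
    have hne : (1:ℂ) + (y:ℂ) ≠ 0 := by
      rw [show (1:ℂ) + (y:ℂ) = ((1+y : ℝ) : ℂ) by push_cast; ring]
      exact_mod_cast h1y.ne'
    have hlog : HasDerivAt (fun w : ℝ => Real.log (1+w)) (1/(1+y)) y := by
      have h := (Real.hasDerivAt_log h1y.ne').comp y ((hasDerivAt_id y).const_add 1)
      simpa [Function.comp_def] using h
    have hE : HasDerivAt (fun w : ℝ => Complex.exp (-((Real.log (1+w) : ℂ) * z)))
        (Complex.exp (-((Real.log (1+y) : ℂ) * z)) * (-(((1/(1+y) : ℝ) : ℂ) * z))) y :=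
      ((hlog.ofReal_comp.mul_const z).neg).cexp
    have hprod := (hasD y hy').mul hE
    have hkey := key y hy'
    have hval : D y * Complex.exp (-((Real.log (1+y) : ℂ) * z)) +
        f y * (Complex.exp (-((Real.log (1+y) : ℂ) * z)) * (-(((1/(1+y) : ℝ) : ℂ) * z))) = 0 := by
      have hcast : (((1/(1+y) : ℝ)) : ℂ) = (1 + (y:ℂ))⁻¹ := by push_cast; ring
      rw [hcast]
      have hD : D y = z * f y * (1 + (y:ℂ))⁻¹ := by
        rw [eq_comm, mul_inv_eq_iff_eq_mul₀ hne, eq_comm]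
        linear_combination hkey
      rw [hD]
      field_simp
      ring
    rw [hval] at hprod
    exact hprod
  have hconst : ∀ y ∈ Set.Ioo (-1:ℝ) 1, g y = g 0 := by
    intro y hy
    have h0 : (0:ℝ) ∈ Set.Ioo (-1:ℝ) 1 := by norm_num
    apply (convex_Ioo (-1:ℝ) 1).is_const_of_fderivWithin_eq_zero
      (fun w hw => (hgderiv w hw).differentiableAt.differentiableWithinAt) _ hy h0
    intro w hw
    rw [fderivWithin_of_isOpen isOpen_Ioo hw]
    have hfd := (hgderiv w hw).hasFDerivAt.fderiv
    rw [hfd]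
    ext v
    simp
  have hg0 : g 0 = 1 := by
    simp only [hg_def, hf_def]
    have hf0 : (∑' n : ℕ, genBinom z n * ((0:ℝ):ℂ)^n) = 1 := by
      rw [tsum_eq_single 0 (fun n hn => by
        simp [zero_pow hn])]
      simp [genBinom_zero]
    rw [hf0]
    norm_num
  have hx' : x ∈ Set.Ioo (-1:ℝ) 1 := ⟨neg_lt_of_abs_lt hx, lt_of_abs_lt hx⟩
  have hfx : f x = Complex.exp ((Real.log (1+x) : ℂ) * z) := by
    have h := hconst x hx'
    rw [hg0] at h
    have hEne : Complex.exp (-((Real.log (1+x) : ℂ) * z)) ≠ 0 := Complex.exp_ne_zero _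
    simp only [hg_def] at h
    rw [Complex.exp_neg] at h
    field_simp at h
    exact h
  have := (sumf x hx).hasSum
  rwa [show (∑' n : ℕ, genBinom z n * (x:ℂ)^n) = f x from rfl, hfx] at this

lemma genBinom_decay (α : ℂ) (hα : 0 < α.re) :
    ∃ (K : ℝ) (N : ℕ), ∀ n : ℕ, N ≤ n →
      ‖genBinom (α-1) n‖ ≤ K * ((n:ℝ)+1) ^ (-(α.re/2)) := by
  set a := α.re with ha
  set b := α.im with hb
  set ε : ℝ := a / 2 with hε
  have hε0 : 0 < ε := by rw [hε]; linarith
  obtain ⟨N, hNge⟩ : ∃ N : ℕ, a + b^2/a ≤ (N:ℝ) := ⟨⌈a + b^2/a⌉₊, Nat.le_ceil _⟩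
  have hNa : a ≤ (N:ℝ) := by
    have : 0 ≤ b^2/a := by positivity
    linarith
  -- single-step norm bound
  have step : ∀ n : ℕ, N ≤ n → ‖(α - 1) - n‖ ≤ ((n:ℝ)+1) - ε := by
    intro n hn
    have hn' : a + b^2/a ≤ (n:ℝ) := le_trans hNge (by exact_mod_cast hn)
    have hba : 0 ≤ b^2/a := by positivity
    have habs : ‖(α - 1) - (n:ℂ)‖ = Real.sqrt ((a - 1 - n)^2 + b^2) := by
      rw [Complex.norm_def, Complex.normSq_apply]
      congr 1
      simp [Complex.sub_re, Complex.sub_im, ha, hb]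
      ring
    rw [habs]
    have hc : (0:ℝ) ≤ (n:ℝ) + 1 - ε := by
      have : a ≤ (n:ℝ) := by nlinarith
      rw [hε]; nlinarith
    rw [show ((n:ℝ)+1) - ε = Real.sqrt (((n:ℝ)+1-ε)^2) from (Real.sqrt_sq hc).symm]
    apply Real.sqrt_le_sqrt
    have h2 : 2*(n:ℝ) ≥ 2*a + 2*(b^2/a) := by linarith
    have hb2 : b^2/a * a = b^2 := div_mul_cancel₀ _ (ne_of_gt hα)
    rw [hε]
    nlinarith [sq_nonneg b, sq_nonneg (a - 1 - (n:ℝ)), hα]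
  -- inductive exponential bound
  have main : ∀ n : ℕ, N ≤ n → ‖genBinom (α-1) n‖ ≤
      ‖genBinom (α-1) N‖ * Real.exp (ε * Real.log ((N:ℝ)+1) - ε * Real.log ((n:ℝ)+1)) := by
    intro n hn
    induction n with
    | zero =>
        have h0 : N = 0 := Nat.le_zero.mp hn
        rw [h0]
        simp
    | succ m ih =>
        rcases Nat.lt_or_ge m N with hm | hm
        · have h0 : N = m + 1 := le_antisymm hn (by omega)
          rw [h0]
          simp
        · have IH := ih hm
          have hm1 : (0:ℝ) < (m:ℝ) + 1 := by positivity
          have hstep := step m hm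
          have hNm : a ≤ (m:ℝ) := le_trans hNa (by exact_mod_cast hm)
          have hnn : 0 ≤ 1 - ε/((m:ℝ)+1) := by
            rw [sub_nonneg, div_le_one hm1, hε]
            linarith
          have hnorm : ‖genBinom (α-1) (m+1)‖ = ‖genBinom (α-1) m‖ * ‖(α-1) - m‖ / (m+1) :=
            norm_genBinom_succ _ m
          have h1 : ‖genBinom (α-1) (m+1)‖ ≤
              ‖genBinom (α-1) m‖ * (1 - ε/((m:ℝ)+1)) := by
            rw [hnorm, div_le_iff₀ hm1]
            calc ‖genBinom (α-1) m‖ * ‖(α-1) - (m:ℂ)‖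
                ≤ ‖genBinom (α-1) m‖ * ((m:ℝ)+1-ε) :=
                  mul_le_mul_of_nonneg_left hstep (norm_nonneg _)
              _ = ‖genBinom (α-1) m‖ * (1 - ε/((m:ℝ)+1)) * ((m:ℝ)+1) := by
                  field_simp
          have h2 : (1 - ε/((m:ℝ)+1)) ≤
              Real.exp (ε * Real.log ((m:ℝ)+1) - ε * Real.log ((m:ℝ)+2)) := by
            have hexp : 1 - ε/((m:ℝ)+1) ≤ Real.exp (-(ε/((m:ℝ)+1))) := by
              have := Real.add_one_le_exp (-(ε/((m:ℝ)+1)))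
              linarith
            apply le_trans hexp
            apply Real.exp_le_exp.mpr
            have hlog : Real.log ((m:ℝ)+2) - Real.log ((m:ℝ)+1) ≤ 1/((m:ℝ)+1) := by
              rw [← Real.log_div (by positivity) (by positivity)]
              have hx : (0:ℝ) < ((m:ℝ)+2)/((m:ℝ)+1) := by positivity
              have := Real.log_le_sub_one_of_pos hx
              have heq : ((m:ℝ)+2)/((m:ℝ)+1) - 1 = 1/((m:ℝ)+1) := by
                field_simp
                norm_num
              linarith
            have h3 := mul_le_mul_of_nonneg_left hlog hε0.le
            have h4 : ε * (Real.log ((m:ℝ)+2) - Real.log ((m:ℝ)+1)) =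
                ε * Real.log ((m:ℝ)+2) - ε * Real.log ((m:ℝ)+1) := by ring
            rw [h4] at h3
            have h5 : ε * (1/((m:ℝ)+1)) = ε/((m:ℝ)+1) := by ring
            rw [h5] at h3
            linarith
          calc ‖genBinom (α-1) (m+1)‖ ≤ ‖genBinom (α-1) m‖ * (1 - ε/((m:ℝ)+1)) := h1
            _ ≤ (‖genBinom (α-1) N‖ *
                  Real.exp (ε * Real.log ((N:ℝ)+1) - ε * Real.log ((m:ℝ)+1))) *
                  Real.exp (ε * Real.log ((m:ℝ)+1) - ε * Real.log ((m:ℝ)+2)) :=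
                mul_le_mul IH h2 hnn (by positivity)
            _ = ‖genBinom (α-1) N‖ *
                  Real.exp (ε * Real.log ((N:ℝ)+1) - ε * Real.log (((m+1:ℕ):ℝ)+1)) := by
                rw [mul_assoc, ← Real.exp_add]
                congr 2
                push_cast
                ring
  -- conclude with rpow form
  refine ⟨‖genBinom (α-1) N‖ * ((N:ℝ)+1) ^ ε, N, fun n hn => ?_⟩
  have h := main n hn
  have hpos : (0:ℝ) < (n:ℝ)+1 := by positivity
  have hNpos : (0:ℝ) < (N:ℝ)+1 := by positivity
  have hexp : Real.exp (ε * Real.log ((N:ℝ)+1) - ε * Real.log ((n:ℝ)+1))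
      = ((N:ℝ)+1) ^ ε * ((n:ℝ)+1) ^ (-ε) := by
    rw [Real.exp_sub, Real.rpow_def_of_pos hNpos, Real.rpow_def_of_pos hpos]
    rw [div_eq_mul_inv, ← Real.exp_neg]
    congr 1 <;> ring
  rw [hexp] at h
  calc ‖genBinom (α-1) n‖ ≤ ‖genBinom (α-1) N‖ * (((N:ℝ)+1) ^ ε * ((n:ℝ)+1) ^ (-ε)) := h
    _ = ‖genBinom (α-1) N‖ * ((N:ℝ)+1) ^ ε * ((n:ℝ)+1) ^ (-(a/2)) := by rw [← hε]; ring

lemma logGamma_bound : ∃ C : ℝ, 0 ≤ C ∧ ∀ t ∈ Set.Ioo (0:ℝ) 1,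
    |Real.log (Real.Gamma t)| ≤ C - Real.log t := by
  have hcont : ContinuousOn (fun x => Real.log (Real.Gamma x)) (Set.Icc (1:ℝ) 2) := by
    intro x hx
    have hx0 : 0 < x := lt_of_lt_of_le one_pos hx.1
    have hΓ : ContinuousAt Real.Gamma x := by
      apply (Real.differentiableAt_Gamma ?_).continuousAt
      intro m
      have : -(m:ℝ) ≤ 0 := neg_nonpos.mpr (Nat.cast_nonneg m)
      linarith
    exact ((Real.continuousAt_log (Real.Gamma_pos_of_pos hx0).ne').comp hΓ).continuousWithinAt
  obtain ⟨C, hC⟩ := isCompact_Icc.exists_bound_of_continuousOn hcont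
  refine ⟨max C 0, le_max_right _ _, ?_⟩
  intro t ht
  have ht0 : 0 < t := ht.1
  have hΓ1 : 0 < Real.Gamma (t+1) := Real.Gamma_pos_of_pos (by linarith)
  have hlog : Real.log (Real.Gamma t) = Real.log (Real.Gamma (t+1)) - Real.log t := by
    rw [Real.Gamma_add_one ht0.ne', Real.log_mul ht0.ne'
      (Real.Gamma_pos_of_pos ht0).ne']
    ring
  have hmem : t+1 ∈ Set.Icc (1:ℝ) 2 := ⟨by linarith, by linarith [ht.2]⟩
  have hb := hC (t+1) hmem
  rw [Real.norm_eq_abs] at hb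
  have hlt : Real.log t < 0 := Real.log_neg ht0 ht.2
  rw [hlog]
  calc |Real.log (Real.Gamma (t+1)) - Real.log t|
      ≤ |Real.log (Real.Gamma (t+1))| + |Real.log t| := abs_sub _ _
    _ ≤ C + (-Real.log t) := by
        rw [abs_of_neg hlt]
        exact add_le_add hb (le_refl _)
    _ ≤ max C 0 - Real.log t := by
        have := le_max_left C 0
        linarith

lemma neg_log_le (t : ℝ) (ht0 : 0 < t) (ht1 : t < 1) :
    -Real.log t ≤ 2 * t ^ (-(1/2) : ℝ) := by
  have hs0 : 0 < t ^ ((1/2):ℝ) := Real.rpow_pos_of_pos ht0 _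
  have hlogr : Real.log (t ^ ((1/2):ℝ)) = (1/2) * Real.log t := Real.log_rpow ht0 _
  have hinv : Real.log (t ^ ((1/2):ℝ))⁻¹ ≤ (t ^ ((1/2):ℝ))⁻¹ - 1 :=
    Real.log_le_sub_one_of_pos (by positivity)
  rw [Real.log_inv] at hinv
  have hval : (t ^ ((1/2):ℝ))⁻¹ = t ^ (-(1/2):ℝ) := by
    rw [← Real.rpow_neg ht0.le]
  rw [hval] at hinv
  have h2_ : -Real.log t = 2 * (-Real.log (t ^ ((1/2):ℝ))) := by rw [hlogr]; ring
  rw [h2_]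
  have hpos : (0:ℝ) < t ^ (-(1/2):ℝ) := Real.rpow_pos_of_pos ht0 _
  nlinarith [hinv]

theorem left_fractional_beta_raabe (α β : ℂ) (hα : 0 < α.re) (hβ : 1 ≤ β.re) :
    Summable (fun n : ℕ =>
      (-1 : ℂ) ^ n * genBinom (α - 1) n * Complex.Gamma ((n : ℂ) + β) *
        rightRL ((n : ℂ) + β)) ∧
    (1 / Complex.Gamma α) *
        ∫ t in (0:ℝ)..1,
          ((1 - t : ℝ) : ℂ) ^ (α - 1) * (t : ℂ) ^ (β - 1) * (Real.log (Real.Gamma t) : ℂ)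
      = (1 / Complex.Gamma α) *
          ∑' n : ℕ, (-1 : ℂ) ^ n * genBinom (α - 1) n * Complex.Gamma ((n : ℂ) + β) *
            rightRL ((n : ℂ) + β) := by
  obtain ⟨C, hC0, hClog⟩ := logGamma_bound
  obtain ⟨K₀, N, hK⟩ := genBinom_decay α hα
  set ε : ℝ := α.re / 2 with hε
  have hε0 : 0 < ε := by rw [hε]; linarith
  set F : ℕ → ℝ → ℂ := fun n t =>
    (-1 : ℂ)^n * genBinom (α-1) n * (t:ℂ)^((n:ℂ) + β - 1) *
      (Real.log (Real.Gamma t) : ℂ) with hF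
  -- measurability
  have hmeas : ∀ n : ℕ, AEStronglyMeasurable (F n) (volume.restrict (Set.Ioo (0:ℝ) 1)) := by
    intro n
    apply ContinuousOn.aestronglyMeasurable _ measurableSet_Ioo
    intro t ht
    have ht0 : 0 < t := ht.1
    have hcpow : ContinuousAt (fun s:ℝ => ((s:ℂ))^((n:ℂ) + β - 1)) t :=
      Complex.continuousAt_ofReal_cpow_const t _ (Or.inr ht0.ne')
    have hΓc : ContinuousAt Real.Gamma t := by
      apply (Real.differentiableAt_Gamma ?_).continuousAt
      intro m
      have : -(m:ℝ) ≤ 0 := neg_nonpos.mpr (Nat.cast_nonneg m)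
      linarith
    have hlogc : ContinuousAt (fun s:ℝ => (Real.log (Real.Gamma s) : ℂ)) t :=
      Complex.continuous_ofReal.continuousAt.comp
        ((Real.continuousAt_log (Real.Gamma_pos_of_pos ht0).ne').comp hΓc)
    exact ((continuousAt_const.mul hcpow).mul hlogc).continuousWithinAt
  -- pointwise norm bound
  have hFbound : ∀ (n : ℕ), ∀ t ∈ Set.Ioo (0:ℝ) 1,
      ‖F n t‖ ≤ ‖genBinom (α-1) n‖ * (C+2) * t ^ ((n:ℝ) - 1/2) := by
    intro n t ht
    have ht0 : 0 < t := ht.1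
    have ht1 : t < 1 := ht.2
    have hre : ((n:ℂ) + β - 1).re = (n:ℝ) + β.re - 1 := by
      simp [Complex.add_re, Complex.sub_re]
    have hnorm1 : ‖(t:ℂ)^((n:ℂ) + β - 1)‖ = t ^ ((n:ℝ) + β.re - 1) := by
      rw [Complex.norm_cpow_eq_rpow_re_of_pos ht0, hre]
    have h2 : t ^ ((n:ℝ) + β.re - 1) ≤ t ^ ((n:ℝ)) :=
      Real.rpow_le_rpow_of_exponent_ge ht0 ht1.le (by linarith)
    have h3 : |Real.log (Real.Gamma t)| ≤ (C+2) * t ^ (-(1/2) : ℝ) := by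
      have ha := hClog t ht
      have hb := neg_log_le t ht0 ht1
      have hc : C ≤ C * t ^ (-(1/2):ℝ) :=
        le_mul_of_one_le_right hC0
          (Real.one_le_rpow_of_pos_of_le_one_of_nonpos ht0 ht1.le (by norm_num))
      calc |Real.log (Real.Gamma t)| ≤ C - Real.log t := ha
        _ ≤ C * t ^ (-(1/2):ℝ) + 2 * t ^ (-(1/2):ℝ) := by linarith
        _ = (C+2) * t ^ (-(1/2):ℝ) := by ring
    have hFn : ‖F n t‖ = ‖genBinom (α-1) n‖ * t ^ ((n:ℝ) + β.re - 1)
        * |Real.log (Real.Gamma t)| := by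
      simp only [hF]
      simp only [norm_mul, norm_pow, norm_neg, norm_one, one_pow, one_mul,
        hnorm1, Complex.norm_real, Real.norm_eq_abs]
    rw [hFn]
    have hrw : t ^ ((n:ℝ)) * ((C+2) * t ^ (-(1/2):ℝ))
        = (C+2) * t ^ ((n:ℝ) - 1/2) := by
      rw [mul_comm (t ^ ((n:ℝ))), mul_assoc, ← Real.rpow_add ht0,
        show -(1/2) + (n:ℝ) = (n:ℝ) - 1/2 from by ring]
    calc ‖genBinom (α-1) n‖ * t ^ ((n:ℝ) + β.re - 1) * |Real.log (Real.Gamma t)|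
        ≤ ‖genBinom (α-1) n‖ * (t ^ ((n:ℝ)) * ((C+2) * t ^ (-(1/2):ℝ))) := by
          rw [mul_assoc]
          apply mul_le_mul_of_nonneg_left _ (norm_nonneg _)
          exact mul_le_mul h2 h3 (abs_nonneg _) (by positivity)
      _ = ‖genBinom (α-1) n‖ * (C+2) * t ^ ((n:ℝ) - 1/2) := by rw [hrw]; ring
  -- integrability of the dominating rpow
  have hg_int : ∀ n : ℕ, IntegrableOn (fun t : ℝ => t ^ ((n:ℝ) - 1/2)) (Set.Ioo (0:ℝ) 1) := by
    intro n
    have h := intervalIntegral.intervalIntegrable_rpow' (a := (0:ℝ)) (b := 1) (r := (n:ℝ) - 1/2)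
      (by have : (0:ℝ) ≤ (n:ℝ) := Nat.cast_nonneg n; linarith)
    rw [intervalIntegrable_iff_integrableOn_Ioc_of_le zero_le_one] at h
    exact h.mono_set Set.Ioo_subset_Ioc_self
  -- integrability of F n
  have hFint : ∀ n : ℕ, Integrable (F n) (volume.restrict (Set.Ioo (0:ℝ) 1)) := by
    intro n
    refine Integrable.mono ((hg_int n).const_mul (‖genBinom (α-1) n‖ * (C+2))) (hmeas n) ?_
    refine (ae_restrict_mem measurableSet_Ioo).mono fun t ht => ?_
    exact le_trans (hFbound n t ht) (le_abs_self _)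
  -- value of the dominating integral
  have hgval : ∀ n : ℕ, (∫ t in Set.Ioo (0:ℝ) 1, t ^ ((n:ℝ) - 1/2))
      = 1 / ((n:ℝ) + 1/2) := by
    intro n
    rw [← integral_Ioc_eq_integral_Ioo, ← intervalIntegral.integral_of_le zero_le_one,
      integral_rpow (Or.inl (by have : (0:ℝ) ≤ (n:ℝ) := Nat.cast_nonneg n; linarith))]
    rw [Real.one_rpow, Real.zero_rpow (by have : (0:ℝ) ≤ (n:ℝ) := Nat.cast_nonneg n; intro h; simp at h; linarith)]
    rw [show (n:ℝ) - 1/2 + 1 = (n:ℝ) + 1/2 by ring]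
    ring
  -- bound on the integral of ‖F n‖
  have hInorm : ∀ n : ℕ, (∫ t in Set.Ioo (0:ℝ) 1, ‖F n t‖)
      ≤ ‖genBinom (α-1) n‖ * (C+2) * (1 / ((n:ℝ) + 1/2)) := by
    intro n
    have hmono : (∫ t in Set.Ioo (0:ℝ) 1, ‖F n t‖)
        ≤ ∫ t in Set.Ioo (0:ℝ) 1, ‖genBinom (α-1) n‖ * (C+2) * t ^ ((n:ℝ) - 1/2) := by
      apply integral_mono_of_nonneg (ae_of_all _ fun t => norm_nonneg _)
        ((hg_int n).const_mul _)
      exact (ae_restrict_mem measurableSet_Ioo).mono fun t ht => hFbound n t ht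
    rw [integral_const_mul, hgval n] at hmono
    exact hmono
  -- summability of the majorant
  have hsumInt : Summable (fun n : ℕ => ∫ t in Set.Ioo (0:ℝ) 1, ‖F n t‖) := by
    apply Summable.of_nonneg_of_le (fun n => integral_nonneg fun t => norm_nonneg _) hInorm
    apply Summable.of_norm_bounded_eventually_nat
      (g := fun n => (|K₀| * (C+2) * 2) * ((n:ℝ)+1) ^ (-(1+ε)))
    · apply Summable.mul_left
      have h1 : Summable (fun n : ℕ => ((n:ℝ)) ^ (-(1+ε))) :=
        Real.summable_nat_rpow.mpr (by linarith)
      have h2 := (summable_nat_add_iff 1).mpr h1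
      apply h2.congr
      intro n
      push_cast
      ring_nf
    · filter_upwards [Filter.eventually_ge_atTop N] with n hn
      have hn1 : (0:ℝ) < (n:ℝ) + 1 := by positivity
      have hKn : ‖genBinom (α-1) n‖ ≤ |K₀| * ((n:ℝ)+1) ^ (-ε) := by
        refine le_trans (hK n hn) ?_
        apply mul_le_mul_of_nonneg_right (le_abs_self _) (Real.rpow_nonneg hn1.le _)
      have hfrac : 1 / ((n:ℝ) + 1/2) ≤ 2 / ((n:ℝ)+1) := by
        rw [div_le_div_iff₀ (by positivity) hn1]
        have : (0:ℝ) ≤ (n:ℝ) := Nat.cast_nonneg n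
        linarith
      have hnonneg : 0 ≤ ‖genBinom (α-1) n‖ * (C+2) * (1/((n:ℝ)+1/2)) := by positivity
      rw [Real.norm_of_nonneg hnonneg]
      have hrpow : ((n:ℝ)+1) ^ (-ε) * (2/((n:ℝ)+1)) = 2 * ((n:ℝ)+1) ^ (-(1+ε)) := by
        rw [show -(1+ε) = -ε + (-1) by ring, Real.rpow_add hn1, Real.rpow_neg_one]
        ring
      calc ‖genBinom (α-1) n‖ * (C+2) * (1/((n:ℝ)+1/2))
          ≤ (|K₀| * ((n:ℝ)+1) ^ (-ε)) * (C+2) * (2/((n:ℝ)+1)) := by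
            apply mul_le_mul (mul_le_mul hKn (le_refl _) (by linarith) (by positivity))
              hfrac (by positivity) (by positivity)
        _ = |K₀| * (C+2) * (((n:ℝ)+1) ^ (-ε) * (2/((n:ℝ)+1))) := by ring
        _ = |K₀| * (C+2) * (2 * ((n:ℝ)+1) ^ (-(1+ε))) := by rw [hrpow]
        _ = (|K₀| * (C+2) * 2) * ((n:ℝ)+1) ^ (-(1+ε)) := by ring
  -- value of each term
  have hterm : ∀ n : ℕ, (∫ t in Set.Ioo (0:ℝ) 1, F n t)
      = (-1:ℂ)^n * genBinom (α-1) n * Complex.Gamma ((n:ℂ)+β) * rightRL ((n:ℂ)+β) := by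
    intro n
    have hΓne : Complex.Gamma ((n:ℂ)+β) ≠ 0 := by
      apply Complex.Gamma_ne_zero_of_re_pos
      rw [Complex.add_re, Complex.natCast_re]
      have : (0:ℝ) ≤ (n:ℝ) := Nat.cast_nonneg n
      linarith
    have hFc : F n = fun t : ℝ => ((-1:ℂ)^n * genBinom (α-1) n) *
        ((t:ℂ)^((n:ℂ) + β - 1) * (Real.log (Real.Gamma t) : ℂ)) := by
      funext t
      simp only [hF]
      ring
    rw [hFc, integral_const_mul]
    rw [rightRL]
    rw [intervalIntegral.integral_of_le zero_le_one, integral_Ioc_eq_integral_Ioo]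
    field_simp
  -- pointwise sum identity
  have hpt : ∀ t ∈ Set.Ioo (0:ℝ) 1, (∑' n : ℕ, F n t)
      = ((1 - t : ℝ) : ℂ) ^ (α - 1) * (t:ℂ) ^ (β - 1) * (Real.log (Real.Gamma t) : ℂ) := by
    intro t ht
    have ht0 : 0 < t := ht.1
    have ht1 : t < 1 := ht.2
    have h1t : (0:ℝ) < 1 - t := by linarith
    have hb := binomial_hasSum (α-1) (x := -t)
      (by rw [abs_neg, abs_of_pos ht0]; exact ht1)
    have hval : Complex.exp ((Real.log (1 + -t) : ℂ) * (α-1)) = ((1-t:ℝ):ℂ)^(α-1) := by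
      rw [show (1:ℝ) + -t = 1 - t by ring]
      rw [Complex.cpow_def_of_ne_zero (by exact_mod_cast h1t.ne' : ((1-t:ℝ):ℂ) ≠ 0)]
      rw [Complex.ofReal_log h1t.le]
    rw [hval] at hb
    have hb2 := hb.mul_right ((t:ℂ)^(β-1) * (Real.log (Real.Gamma t) : ℂ))
    have heq : ∀ n:ℕ, F n t = genBinom (α-1) n * ((-t:ℝ):ℂ)^n *
        ((t:ℂ)^(β-1) * (Real.log (Real.Gamma t) : ℂ)) := by
      intro n
      simp only [hF]
      have hsplit : (t:ℂ)^((n:ℂ)+β-1) = (t:ℂ)^(n:ℕ) * (t:ℂ)^(β-1) := by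
        rw [show (n:ℂ)+β-1 = (n:ℂ) + (β-1) by ring,
          Complex.cpow_add _ _ (by exact_mod_cast ht0.ne' : (t:ℂ) ≠ 0),
          Complex.cpow_natCast]
      have hneg : ((-t:ℝ):ℂ)^n = (-1:ℂ)^n * (t:ℂ)^n := by
        push_cast
        rw [neg_pow]
      rw [hsplit, hneg]
      ring
    rw [tsum_congr heq, hb2.tsum_eq]
    ring
  -- assembly
  have hSint : Summable (fun n : ℕ => ∫ t in Set.Ioo (0:ℝ) 1, F n t) :=
    Summable.of_norm_bounded hsumInt (fun n => norm_integral_le_integral_norm _)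
  constructor
  · exact hSint.congr hterm
  · congr 1
    rw [intervalIntegral.integral_of_le zero_le_one, integral_Ioc_eq_integral_Ioo]
    calc (∫ t in Set.Ioo (0:ℝ) 1,
          ((1 - t : ℝ) : ℂ) ^ (α - 1) * (t:ℂ) ^ (β - 1) * (Real.log (Real.Gamma t) : ℂ))
        = ∫ t in Set.Ioo (0:ℝ) 1, (∑' n : ℕ, F n t) :=
          setIntegral_congr_fun measurableSet_Ioo (fun t ht => (hpt t ht).symm)
      _ = ∑' n : ℕ, ∫ t in Set.Ioo (0:ℝ) 1, F n t :=
          (integral_tsum_of_summable_integral_norm hFint hsumInt).symm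
      _ = _ := tsum_congr hterm
end

section
/- Let m ≥ 1 and k ≥ 1 be natural numbers. Then I₀₊^m [x^{k−1} log Γ(x)](1) = (1/(m−1)!) ∫₀¹ (1−t)^{m−1} t^{k−1} log Γ(t) dt = Σ_{n=0}^{m−1} (−1)^n · ((n+k−1)(n+k−2)⋯(n+1)/(m−1−n)!) · I₁₋^{n+k} log Γ(0), where the empty product (n+k−1)⋯(n+1) for k = 1 is taken to be 1, and I₁₋^{j} log Γ(0) = (1/(j−1)!) ∫₀¹ t^{j−1} log Γ(t) dt for a positive integer j. -/
open MeasureTheory Finset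

lemma intInt_log : IntervalIntegrable Real.log volume 0 1 := by
  have h : IntervalIntegrable (fun x => -Real.log x) volume 0 1 := by
    apply intervalIntegral.intervalIntegrable_deriv_of_nonneg
      (g := fun x => x - x * Real.log x)
    · exact (continuous_id.sub Real.continuous_mul_log).continuousOn
    · intro x hx
      simp only [Set.mem_Ioo, min_eq_left, max_eq_right, zero_le_one] at hx
      have := (hasDerivAt_id x).sub (Real.hasDerivAt_mul_log (ne_of_gt hx.1))
      exact this.congr_deriv (by ring)
    · intro x hx
      simp only [Set.mem_Ioo, min_eq_left, max_eq_right, zero_le_one] at hx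
      simp [Real.log_nonpos hx.1.le hx.2.le]
  have e : (-(fun x => -Real.log x)) = Real.log := by funext x; simp
  simpa [e] using h.neg

lemma intInt_logGamma : IntervalIntegrable (fun t => Real.log (Real.Gamma t)) volume 0 1 := by
  have hc : ContinuousOn (fun t : ℝ => Real.log (Real.Gamma (t + 1))) (Set.uIcc (0:ℝ) 1) := by
    intro t ht
    rw [Set.uIcc_of_le zero_le_one] at ht
    have ht1 : (0:ℝ) < t + 1 := by linarith [ht.1]
    have hG : ContinuousAt (fun t : ℝ => Real.Gamma (t + 1)) t := by
      have : DifferentiableAt ℝ Real.Gamma (t + 1) := by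
        apply Real.differentiableAt_Gamma
        intro m
        have : (0:ℝ) ≤ m := Nat.cast_nonneg m
        intro h; rw [h] at ht1; linarith
      exact ContinuousAt.comp (f := fun t : ℝ => t + 1) this.continuousAt (by fun_prop)
    have hlog : ContinuousAt (fun t : ℝ => Real.log (Real.Gamma (t + 1))) t :=
      ContinuousAt.comp (f := fun t : ℝ => Real.Gamma (t + 1))
        (Real.continuousAt_log (ne_of_gt (Real.Gamma_pos_of_pos ht1))) hG
    exact hlog.continuousWithinAt
  have h2 : IntervalIntegrable (fun t : ℝ => Real.log (Real.Gamma (t + 1)) - Real.log t)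
      volume 0 1 := hc.intervalIntegrable.sub intInt_log
  apply h2.congr
  intro t ht
  dsimp only
  rw [Set.uIoc_of_le zero_le_one] at ht
  have ht0 : (0:ℝ) < t := ht.1
  rw [Real.Gamma_add_one (ne_of_gt ht0),
    Real.log_mul (ne_of_gt ht0) (ne_of_gt (Real.Gamma_pos_of_pos ht0))]
  ring

lemma intInt_poly_logGamma (j : ℕ) :
    IntervalIntegrable (fun t : ℝ => t ^ j * Real.log (Real.Gamma t)) volume 0 1 := by
  have := intInt_logGamma.continuousOn_mul (g := fun t : ℝ => t ^ j)
    (continuous_pow j).continuousOn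
  exact this

lemma prod_ascending (n k : ℕ) :
    ∏ i ∈ Finset.range k, ((n : ℝ) + 1 + i) = ((n + k).factorial : ℝ) / (n.factorial : ℝ) := by
  induction k with
  | zero => simp [div_self (show (n.factorial : ℝ) ≠ 0 from Nat.cast_ne_zero.2 n.factorial_ne_zero)]
  | succ k ih =>
    rw [Finset.prod_range_succ, ih]
    have h : ((n + (k+1)).factorial : ℝ) = ((n + k).factorial : ℝ) * ((n : ℝ) + 1 + k) := by
      have : n + (k + 1) = (n + k) + 1 := by ring
      rw [this, Nat.factorial_succ]
      push_cast
      ring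
    rw [h]
    have hnf : (n.factorial : ℝ) ≠ 0 := Nat.cast_ne_zero.2 n.factorial_ne_zero
    field_simp

/-- The `j`-fold repeated right-sided integral of `log Γ` for a positive integer `j`:
`I₁₋^j log Γ(0) = (1/(j−1)!) ∫₀¹ t^{j−1} log Γ(t) dt`. -/
noncomputable def rightRLNat (j : ℕ) : ℝ :=
  (1 / ((j - 1).factorial : ℝ)) * ∫ t in (0:ℝ)..1, t ^ (j - 1) * Real.log (Real.Gamma t)

theorem repeated_left_nat_raabe (m k : ℕ) (hm : 1 ≤ m) (hk : 1 ≤ k) :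
    (1 / ((m - 1).factorial : ℝ)) *
        ∫ t in (0:ℝ)..1, (1 - t) ^ (m - 1) * t ^ (k - 1) * Real.log (Real.Gamma t)
      = ∑ n ∈ Finset.range m,
          (-1 : ℝ) ^ n *
            ((∏ i ∈ Finset.range (k - 1), ((n : ℝ) + 1 + i)) / ((m - 1 - n).factorial : ℝ)) *
            rightRLNat (n + k) := by
  obtain ⟨m', rfl⟩ : ∃ m', m = m' + 1 := ⟨m - 1, (Nat.succ_pred_eq_of_pos hm).symm⟩
  obtain ⟨k', rfl⟩ : ∃ k', k = k' + 1 := ⟨k - 1, (Nat.succ_pred_eq_of_pos hk).symm⟩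
  simp only [Nat.add_sub_cancel]
  -- expand the binomial inside the integral
  have hexp : ∀ t : ℝ, (1 - t) ^ m' * t ^ k' * Real.log (Real.Gamma t)
      = ∑ n ∈ Finset.range (m' + 1),
          ((-1 : ℝ) ^ n * (m'.choose n : ℝ)) * (t ^ (n + k') * Real.log (Real.Gamma t)) := by
    intro t
    have : (1 - t) ^ m' = ∑ n ∈ Finset.range (m' + 1), (-t) ^ n * (1:ℝ) ^ (m' - n) * m'.choose n := by
      rw [← add_pow]; ring_nf
    rw [this, Finset.sum_mul, Finset.sum_mul]
    refine Finset.sum_congr rfl fun n _ => ?_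
    rw [neg_pow, pow_add]
    ring
  rw [intervalIntegral.integral_congr (fun t _ => hexp t)]
  rw [intervalIntegral.integral_finset_sum (fun n _ =>
    (intInt_poly_logGamma (n + k')).const_mul _)]
  rw [Finset.mul_sum]
  refine Finset.sum_congr rfl fun n hn => ?_
  rw [intervalIntegral.integral_const_mul]
  have hidx : n + (k' + 1) = (n + k') + 1 := by omega
  rw [rightRLNat, hidx, Nat.add_sub_cancel, prod_ascending]
  have hle : n ≤ m' := Nat.lt_succ_iff.1 (Finset.mem_range.1 hn)
  have key : (m'.choose n : ℝ) * (n.factorial : ℝ) * ((m' - n).factorial : ℝ)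
      = (m'.factorial : ℝ) := by
    exact_mod_cast congrArg (Nat.cast : ℕ → ℝ) (Nat.choose_mul_factorial_mul_factorial hle)
  have h1 : (m'.factorial : ℝ) ≠ 0 := Nat.cast_ne_zero.2 m'.factorial_ne_zero
  have h2 : (n.factorial : ℝ) ≠ 0 := Nat.cast_ne_zero.2 n.factorial_ne_zero
  have h3 : ((m' - n).factorial : ℝ) ≠ 0 := Nat.cast_ne_zero.2 (m' - n).factorial_ne_zero
  have h4 : ((n + k').factorial : ℝ) ≠ 0 := Nat.cast_ne_zero.2 (n + k').factorial_ne_zero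
  set J := ∫ t in (0:ℝ)..1, t ^ (n + k') * Real.log (Real.Gamma t)
  have hc : (1 / (m'.factorial : ℝ)) * ((-1:ℝ) ^ n * (m'.choose n : ℝ))
      = (-1:ℝ) ^ n * (((n + k').factorial / (n.factorial : ℝ)) / ((m' - n).factorial : ℝ))
        * (1 / ((n + k').factorial : ℝ)) := by
    field_simp
    linear_combination key
  linear_combination J * hc
end
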